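/- Let Ω ⊆ P(ℝ^{d+1}) be a proper domain (open, connected, bounded in an affine chart) and define for x, y ∈ Ω: c_Ω(x,y) = sup{H_I(f(x), f(y)) : f ∈ Proj(Ω, I)}, where Proj(Ω,I) is the set of restrictions to Ω of projective maps T ∈ P(Lin(ℝ^{d+1}, ℝ²)) with ker T ∩ Ω = ∅ and T(Ω) ⊆ I. Then c_Ω(x,y) = C_Ω(x,y), where C_Ω(x,y) = sup over [ξ],[η] ∈ Ω* of (1/2)|log|ξ(x)η(y)/(ξ(y)η(x))|| and Ω* = {[f] ∈ P(ℝ^{(d+1)*}) : f(x) ≠ 0 ∀ [x] ∈ Ω}. -/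

import Mathlib

open scoped LinearAlgebra.Projectivization
open Projectivization

/-- The quotient topology on a projectivization. -/
instance projTopology {K V : Type*} [DivisionRing K] [AddCommGroup V] [Module K V]
    [TopologicalSpace V] : TopologicalSpace (ℙ K V) :=
  inferInstanceAs (TopologicalSpace (Quotient (projectivizationSetoid K V)))

/-- The (1/2-normalized) Hilbert metric on the interval `I = {[1:x] : |x| < 1} ⊂ P(ℝ²)`,
expressed through the functionals `ξ₁(v) = v₀ + v₁`, `ξ₂(v) = v₀ − v₁` vanishing at the
endpoints of `I`; this is scale-invariant in each argument. -/
noncomputable def hilbertI (u w : Fin 2 → ℝ) : ℝ :=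
  (1/2) * |Real.log (abs (((u 0 + u 1) * (w 0 - w 1)) / ((w 0 + w 1) * (u 0 - u 1))))|

/-!
A projective map `T` into `I` gives the two functionals `ξ₁ ∘ T`, `ξ₂ ∘ T`, whose product
`(T₀ + T₁)(T₀ - T₁) = T₀² - T₁²` is positive on `Ω`; conversely two functionals `f, g` with
`f g > 0` on `Ω` give `T = (f + g, f - g)`, with `ξ₁ ∘ T = 2f`, `ξ₂ ∘ T = 2g`. Any two
functionals nonvanishing on `Ω` can be brought into this position by replacing `g` with `-g`
if necessary, since `f g` has constant sign on the connected set `Ω`; this change of sign does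
not affect `C_Ω`.
-/

lemma abs_lt_abs_iff_pos_add_mul_sub {a b : ℝ} : |b| < |a| ↔ 0 < (a + b) * (a - b) := by
  rw [← sq_lt_sq, ← sub_pos]
  ring_nf

lemma mul_neg_div_mul_neg {a b c e : ℝ} : a * -b / (c * -e) = a * b / (c * e) := by
  rw [mul_neg, mul_neg, neg_div_neg_eq]

section

variable {V : Type*} [AddCommGroup V] [Module ℝ V] [TopologicalSpace V]

lemma pos_mul_smul_iff (f g : StrongDual ℝ V) {a : ℝ} (ha : a ≠ 0) (v : V) :
    0 < f (a • v) * g (a • v) ↔ 0 < f v * g v := by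
  rw [map_smul, map_smul, smul_eq_mul, smul_eq_mul, mul_mul_mul_comm, ← sq]
  exact mul_pos_iff_of_pos_left (by positivity)

lemma Projectivization.isOpen_setOf_pos_mul_rep (f g : StrongDual ℝ V) :
    IsOpen {z : ℙ ℝ V | 0 < f z.rep * g z.rep} := by
  refine isQuotientMap_quot_mk.isOpen_preimage.mp ?_
  convert (isOpen_lt continuous_const (by fun_prop) :
    IsOpen {v : {v : V // v ≠ 0} | 0 < f v * g v}) using 1
  ext ⟨v, hv⟩
  obtain ⟨a, ha⟩ := exists_smul_eq_mk_rep ℝ v hv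
  change 0 < f (mk ℝ v hv).rep * g (mk ℝ v hv).rep ↔ _
  rw [← ha]
  exact pos_mul_smul_iff f g a.ne_zero v

lemma IsPreconnected.exists_pos_mul_rep {Ω : Set (ℙ ℝ V)} (hΩ : IsPreconnected Ω)
    {f g : StrongDual ℝ V} (hf : ∀ z ∈ Ω, f z.rep ≠ 0) (hg : ∀ z ∈ Ω, g z.rep ≠ 0) :
    ∃ g' ∈ ({g, -g} : Set (StrongDual ℝ V)), ∀ z ∈ Ω, 0 < f z.rep * g' z.rep := by
  have hcover : Ω ⊆ {z | 0 < f z.rep * g z.rep} ∪ {z | 0 < f z.rep * (-g) z.rep} := by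
    intro z hz
    simpa [mul_neg, neg_pos] using (mul_ne_zero (hf z hz) (hg z hz)).symm.lt_or_gt.symm
  have hdisj : Disjoint {z : ℙ ℝ V | 0 < f z.rep * g z.rep} {z | 0 < f z.rep * (-g) z.rep} :=
    Set.disjoint_left.mpr fun z (hpos : 0 < f z.rep * g z.rep)
      (hneg : 0 < f z.rep * (-g) z.rep) ↦ by
      rw [neg_apply, mul_neg, neg_pos] at hneg
      exact hneg.not_gt hpos
  rcases hΩ.subset_or_subset (isOpen_setOf_pos_mul_rep f g) (isOpen_setOf_pos_mul_rep f (-g))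
    hdisj hcover with h | h
  · exact ⟨g, .inl rfl, h⟩
  · exact ⟨-g, .inr rfl, h⟩

lemma exists_dual_pair_eq_hilbertI [IsTopologicalAddGroup V] [ContinuousSMul ℝ V] [T2Space V]
    [FiniteDimensional ℝ V] {Ω : Set (ℙ ℝ V)} (T : V →ₗ[ℝ] Fin 2 → ℝ)
    (hT : ∀ z ∈ Ω, |T z.rep 1| < |T z.rep 0|) (u w : V) :
    ∃ f g : StrongDual ℝ V, (∀ z ∈ Ω, f z.rep ≠ 0) ∧ (∀ z ∈ Ω, g z.rep ≠ 0) ∧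
      hilbertI (T u) (T w) = 1 / 2 * |Real.log (abs (f u * g w / (f w * g u)))| := by
  let f := LinearMap.toContinuousLinearMap (LinearMap.proj 0 ∘ₗ T + LinearMap.proj 1 ∘ₗ T)
  let g := LinearMap.toContinuousLinearMap (LinearMap.proj 0 ∘ₗ T - LinearMap.proj 1 ∘ₗ T)
  have hfg : ∀ z ∈ Ω, 0 < f z.rep * g z.rep := fun z hz ↦
    abs_lt_abs_iff_pos_add_mul_sub.mp (hT z hz)
  exact ⟨f, g, fun z hz ↦ left_ne_zero_of_mul (hfg z hz).ne',
    fun z hz ↦ right_ne_zero_of_mul (hfg z hz).ne', rfl⟩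

lemma exists_linearMap_eq_hilbertI {Ω : Set (ℙ ℝ V)} (f g : StrongDual ℝ V)
    (hfg : ∀ z ∈ Ω, 0 < f z.rep * g z.rep) (u w : V) :
    ∃ T : V →ₗ[ℝ] Fin 2 → ℝ, (∀ z ∈ Ω, T z.rep ≠ 0) ∧ (∀ z ∈ Ω, |T z.rep 1| < |T z.rep 0|) ∧
      1 / 2 * |Real.log (abs (f u * g w / (f w * g u)))| = hilbertI (T u) (T w) := by
  let T : V →ₗ[ℝ] Fin 2 → ℝ := LinearMap.pi ![(f + g : StrongDual ℝ V), (f - g : StrongDual ℝ V)]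
  have hT : ∀ v, T v 0 + T v 1 = 2 * f v ∧ T v 0 - T v 1 = 2 * g v := fun v ↦ by
    simp [T, two_mul]
  have hI : ∀ z ∈ Ω, |T z.rep 1| < |T z.rep 0| := fun z hz ↦ by
    rw [abs_lt_abs_iff_pos_add_mul_sub, (hT _).1, (hT _).2]
    nlinarith [hfg z hz]
  refine ⟨T, fun z hz h ↦ ?_, hI, ?_⟩
  · simpa [h] using hI z hz
  · rw [hilbertI, (hT u).1, (hT u).2, (hT w).1, (hT w).2]
    congr 4
    ring

end

theorem stmt_17_general (d : ℕ)
    (Ω : Set (ℙ ℝ (Fin (d+1) → ℝ))) (hconn : IsConnected Ω)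
    (x y : ℙ ℝ (Fin (d+1) → ℝ)) :
    sSup {r : ℝ | ∃ T : (Fin (d+1) → ℝ) →ₗ[ℝ] (Fin 2 → ℝ),
        (∀ z ∈ Ω, T (Projectivization.rep z) ≠ 0) ∧
        (∀ z ∈ Ω, |(T (Projectivization.rep z)) 1| < |(T (Projectivization.rep z)) 0|) ∧
        r = hilbertI (T (Projectivization.rep x)) (T (Projectivization.rep y))} =
    sSup {r : ℝ | ∃ f g : StrongDual ℝ (Fin (d+1) → ℝ),
        (∀ z ∈ Ω, f (Projectivization.rep z) ≠ 0) ∧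
        (∀ z ∈ Ω, g (Projectivization.rep z) ≠ 0) ∧
        r = (1/2) * |Real.log (abs ((f (Projectivization.rep x) * g (Projectivization.rep y)) /
              (f (Projectivization.rep y) * g (Projectivization.rep x))))|} := by
  congr 1
  ext r
  constructor
  · rintro ⟨T, -, hT, rfl⟩
    exact exists_dual_pair_eq_hilbertI T hT x.rep y.rep
  · rintro ⟨f, g, hf, hg, rfl⟩
    obtain ⟨g', hg', hfg'⟩ := hconn.isPreconnected.exists_pos_mul_rep hf hg
    have hsign : f x.rep * g' y.rep / (f y.rep * g' x.rep) =
        f x.rep * g y.rep / (f y.rep * g x.rep) := by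
      rcases hg' with rfl | rfl
      · rfl
      · exact mul_neg_div_mul_neg
    rw [← hsign]
    exact exists_linearMap_eq_hilbertI f g' hfg' x.rep y.rep

/-- Let `Ω ⊆ P(ℝ^{d+1})` be a proper domain.  Then Kobayashi's
Carathéodory-type metric `c_Ω(x,y) = sup {H_I(f(x), f(y)) : f ∈ Proj(Ω, I)}` — the
supremum over projective maps `T : ℝ^{d+1} → ℝ²` with `ker T ∩ Ω = ∅` and `T(Ω) ⊆ I` —
coincides with `C_Ω(x,y) = sup_{[ξ],[η] ∈ Ω*} (1/2)|log|ξ(x)η(y)/(ξ(y)η(x))||`. -/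
theorem stmt_17 (d : ℕ)
    (Ω : Set (ℙ ℝ (Fin (d+1) → ℝ))) (hopen : IsOpen Ω) (hconn : IsConnected Ω)
    (hproper : ∃ η : StrongDual ℝ (Fin (d+1) → ℝ), η ≠ 0 ∧
      ∀ z ∈ closure Ω, η (Projectivization.rep z) ≠ 0)
    (x y : ℙ ℝ (Fin (d+1) → ℝ)) (hx : x ∈ Ω) (hy : y ∈ Ω) :
    sSup {r : ℝ | ∃ T : (Fin (d+1) → ℝ) →ₗ[ℝ] (Fin 2 → ℝ),
        (∀ z ∈ Ω, T (Projectivization.rep z) ≠ 0) ∧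
        (∀ z ∈ Ω, |(T (Projectivization.rep z)) 1| < |(T (Projectivization.rep z)) 0|) ∧
        r = hilbertI (T (Projectivization.rep x)) (T (Projectivization.rep y))} =
    sSup {r : ℝ | ∃ f g : StrongDual ℝ (Fin (d+1) → ℝ),
        (∀ z ∈ Ω, f (Projectivization.rep z) ≠ 0) ∧
        (∀ z ∈ Ω, g (Projectivization.rep z) ≠ 0) ∧
        r = (1/2) * |Real.log (abs ((f (Projectivization.rep x) * g (Projectivization.rep y)) /
              (f (Projectivization.rep y) * g (Projectivization.rep x))))|} :=
  stmt_17_general d Ω hconn x y
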